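/- arXiv:1712.07400 — 2 statements merged into one kernel-verified Lean document; each statement's English description precedes it below -/
import Mathlib

section
/- If a unit vector |X⟩ = ∑_{i=1}^{2m} γ_i |i⟩ has some index l with | |γ_l|² − 1/(2m) | > f/m for some f > 0, then the probability that a measurement of |X⟩ in the Fourier basis does NOT yield the uniform superposition state |0̄⟩ = (1/√(2m))∑_i |i⟩ is strictly greater than f²/(4m²). -/
/-!
Write `a = |γ_l|` and `b = 1/√(2m)` for the `l`-th amplitudes of `X` and of the uniform state `ū`.
Splitting off the `l`-th term of `⟨X, ū⟩` and applying Cauchy–Schwarz to the rest gives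
`|⟨X, ū⟩| ≤ a b + √(1 - a²) √(1 - b²)`. With `a = cos α`, `b = cos β` the right side is
`cos (α - β)`, so `1 - |⟨X, ū⟩|² ≥ sin² (α - β) ≥ sin² (α - β) sin² (α + β) = (a² - b²)²`,
and `(a² - b²)² > (f / m)² ≥ f² / (4 m²)`.
-/

open Finset

section

variable {𝕜 ι : Type*} [RCLike 𝕜] [Fintype ι] [DecidableEq ι]

theorem EuclideanSpace.sum_erase_norm_sq_eq (x : EuclideanSpace 𝕜 ι) (l : ι) :
    ∑ i ∈ univ.erase l, ‖x i‖ ^ 2 = ‖x‖ ^ 2 - ‖x l‖ ^ 2 := by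
  rw [EuclideanSpace.norm_sq_eq, ← add_sum_erase _ _ (mem_univ l), add_sub_cancel_left]

theorem EuclideanSpace.norm_inner_le_norm_apply_mul_add_sqrt_mul_sqrt
    (x y : EuclideanSpace 𝕜 ι) (l : ι) :
    ‖(inner 𝕜 x y : 𝕜)‖ ≤ ‖x l‖ * ‖y l‖ +
      √(‖x‖ ^ 2 - ‖x l‖ ^ 2) * √(‖y‖ ^ 2 - ‖y l‖ ^ 2) := by
  rw [PiLp.inner_apply, ← add_sum_erase _ _ (mem_univ l),
    ← sum_erase_norm_sq_eq x l, ← sum_erase_norm_sq_eq y l]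
  calc _ ≤ ‖(inner 𝕜 (x l) (y l) : 𝕜)‖ + ∑ i ∈ univ.erase l, ‖(inner 𝕜 (x i) (y i) : 𝕜)‖ :=
        (norm_add_le _ _).trans (by gcongr; exact norm_sum_le _ _)
    _ ≤ ‖x l‖ * ‖y l‖ + ∑ i ∈ univ.erase l, ‖x i‖ * ‖y i‖ := by
        gcongr with i <;> exact norm_inner_le_norm _ _
    _ ≤ _ := by gcongr; exact Real.sum_mul_le_sqrt_mul_sqrt _ _ _

end

theorem sq_sub_sq_sq_le_one_sub_sq {a a' b b' : ℝ} (ha : a ^ 2 + a' ^ 2 = 1)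
    (hb : b ^ 2 + b' ^ 2 = 1) : (a ^ 2 - b ^ 2) ^ 2 ≤ 1 - (a * b + a' * b') ^ 2 := by
  have hdiff : a ^ 2 - b ^ 2 = (a * b' - a' * b) * (a * b' + a' * b) := by
    linear_combination b ^ 2 * ha - a ^ 2 * hb
  have hsum : (a * b' + a' * b) ^ 2 ≤ 1 := by
    nlinarith [sq_nonneg (a * b - a' * b')]
  have hlagrange : 1 - (a * b + a' * b') ^ 2 = (a * b' - a' * b) ^ 2 := by
    linear_combination (-(b ^ 2 + b' ^ 2)) * ha - hb
  rw [hdiff, hlagrange, mul_pow]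
  exact mul_le_of_le_one_right (sq_nonneg _) hsum

theorem EuclideanSpace.sq_sub_sq_norm_apply_le_one_sub_sq_norm_inner
    {𝕜 ι : Type*} [RCLike 𝕜] [Fintype ι] {x y : EuclideanSpace 𝕜 ι}
    (hx : ‖x‖ = 1) (hy : ‖y‖ = 1) (l : ι) :
    (‖x l‖ ^ 2 - ‖y l‖ ^ 2) ^ 2 ≤ 1 - ‖(inner 𝕜 x y : 𝕜)‖ ^ 2 := by
  classical
  have hsplit := norm_inner_le_norm_apply_mul_add_sqrt_mul_sqrt x y l
  have hx' := sum_erase_norm_sq_eq x l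
  have hy' := sum_erase_norm_sq_eq y l
  rw [hx, one_pow] at hsplit hx'
  rw [hy, one_pow] at hsplit hy'
  have hxl : ‖x l‖ ^ 2 + √(1 - ‖x l‖ ^ 2) ^ 2 = 1 := by
    rw [Real.sq_sqrt (hx' ▸ sum_nonneg fun _ _ => sq_nonneg _), add_sub_cancel]
  have hyl : ‖y l‖ ^ 2 + √(1 - ‖y l‖ ^ 2) ^ 2 = 1 := by
    rw [Real.sq_sqrt (hy' ▸ sum_nonneg fun _ _ => sq_nonneg _), add_sub_cancel]
  calc _ ≤ 1 - (‖x l‖ * ‖y l‖ + √(1 - ‖x l‖ ^ 2) * √(1 - ‖y l‖ ^ 2)) ^ 2 :=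
        sq_sub_sq_sq_le_one_sub_sq hxl hyl
    _ ≤ 1 - ‖(inner 𝕜 x y : 𝕜)‖ ^ 2 := by gcongr

/-- if some amplitude of a unit state deviates from 1/(2m) by more
than f/m, a Fourier-basis measurement fails to give the uniform superposition
with probability greater than f²/(4m²). -/
theorem fourier_projection_detects_nonuniformity
    (m : ℕ) (hm : 1 ≤ m) (X : EuclideanSpace ℂ (Fin (2 * m)))
    (hX : ‖X‖ = 1) (f : ℝ) (hf : 0 < f)
    (hl : ∃ l, |‖X l‖ ^ 2 - 1 / (2 * m)| > f / m)
    (ubar : EuclideanSpace ℂ (Fin (2 * m)))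
    (hubar : ∀ i, ubar i = 1 / Real.sqrt (2 * m)) :
    1 - ‖(inner ℂ X ubar : ℂ)‖ ^ 2 > f ^ 2 / (4 * m ^ 2) := by
  obtain ⟨l, hl⟩ := hl
  have hm0 : (0 : ℝ) < m := by exact_mod_cast hm
  have hubar_apply : ∀ i, ‖ubar i‖ ^ 2 = 1 / (2 * m) := fun i => by
    rw [hubar, norm_div, norm_one, Complex.norm_real, Real.norm_of_nonneg (Real.sqrt_nonneg _),
      div_pow, one_pow, Real.sq_sqrt (by positivity)]
  have hubar_norm : ‖ubar‖ = 1 := by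
    rw [← pow_eq_one_iff_of_nonneg (norm_nonneg _) two_ne_zero, EuclideanSpace.norm_sq_eq]
    simp only [hubar_apply, sum_const, card_univ, Fintype.card_fin, nsmul_eq_mul]
    push_cast
    field_simp
  have hdev : (f / m) ^ 2 < (‖X l‖ ^ 2 - ‖ubar l‖ ^ 2) ^ 2 := by
    rw [hubar_apply, ← sq_abs (_ - _)]
    exact pow_lt_pow_left₀ hl (by positivity) two_ne_zero
  calc f ^ 2 / (4 * m ^ 2) ≤ (f / m) ^ 2 := by
        rw [div_pow]; gcongr; linarith [sq_nonneg (m : ℝ)]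
    _ < _ := hdev
    _ ≤ _ := EuclideanSpace.sq_sub_sq_norm_apply_le_one_sub_sq_norm_inner hX hubar_norm l
end

section
/- Let |S⟩ = ∑_{i=1}^{m} a_i |i⟩|ψ_i⟩ and |S'⟩ = ∑_{i=1}^{m} a'_i |i⟩|ψ'_i⟩ be unit vectors with each |ψ_i⟩, |ψ'_i⟩ a unit vector, and define |δ_i⟩ = a_i|ψ_i⟩ − a'_i|ψ'_i⟩. If there exists k with ⟨δ_k|δ_k⟩ ≥ z, then after multiplying |S'⟩ by a suitable global phase making ⟨S|S'⟩ real and nonnegative, the SWAP test between |S⟩ and |S'⟩ rejects with probability at least z/4. -/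
open RCLike in
theorem RCLike.norm_eq_re_of_im_eq_zero {𝕜 : Type*} [RCLike 𝕜] {w : 𝕜} (him : im w = 0)
    (hre : 0 ≤ re w) : ‖w‖ = re w := by
  conv_lhs => rw [← re_add_im w, him, ofReal_zero, zero_mul, add_zero]
  exact norm_of_nonneg hre

open RCLike in
theorem norm_sub_sq_div_four_le_of_inner_nonneg {𝕜 E : Type*} [RCLike 𝕜] [NormedAddCommGroup E]
    [InnerProductSpace 𝕜 E] {x y : E} (hx : ‖x‖ = 1) (hy : ‖y‖ = 1)
    (him : im (inner 𝕜 x y) = 0) (hre : 0 ≤ re (inner 𝕜 x y)) :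
    ‖x - y‖ ^ 2 / 4 ≤ (1 - ‖(inner 𝕜 x y : 𝕜)‖ ^ 2) / 2 := by
  have hdist : ‖x - y‖ ^ 2 = 2 - 2 * re (inner 𝕜 x y) := by
    rw [@norm_sub_sq 𝕜, hx, hy]; ring
  rw [RCLike.norm_eq_re_of_im_eq_zero him hre]
  -- with `c = re ⟪x, y⟫`, the gap is `c (1 - c) / 2`, and `c ≤ 1` because `‖x - y‖² ≥ 0`
  nlinarith [sq_nonneg ‖x - y‖]

theorem swapS_test_soundness_general
    (m : ℕ) (V : Type*) [NormedAddCommGroup V] [InnerProductSpace ℂ V]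
    (a a' : Fin m → ℂ) (ψ ψ' : Fin m → V)
    (S S' : PiLp 2 (fun _ : Fin m => V))
    (hS : ∀ i, S i = a i • ψ i) (hS' : ∀ i, S' i = a' i • ψ' i)
    (hSnorm : ‖S‖ = 1) (hS'norm : ‖S'‖ = 1)
    (hreal : ((inner ℂ S S' : ℂ)).im = 0) (hnonneg : 0 ≤ ((inner ℂ S S' : ℂ)).re)
    (z : ℝ) (hk : ∃ k, ‖a k • ψ k - a' k • ψ' k‖ ^ 2 ≥ z) :
    (1 - ‖(inner ℂ S S' : ℂ)‖ ^ 2) / 2 ≥ z / 4 := by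
  obtain ⟨k, hk⟩ := hk
  have hz : z ≤ ‖S - S'‖ ^ 2 :=
    calc z ≤ ‖(S - S') k‖ ^ 2 := by rw [PiLp.sub_apply, hS, hS']; exact hk
      _ ≤ ‖S - S'‖ ^ 2 := by gcongr; exact PiLp.norm_apply_le _ k
  have hswap := norm_sub_sq_div_four_le_of_inner_nonneg (𝕜 := ℂ) hSnorm hS'norm hreal hnonneg
  linarith

/-- state consistency. If some component difference
δ_k = a_k|ψ_k⟩ − a'_k|ψ'_k⟩ has squared norm at least z, and the global phase
of |S'⟩ has been chosen so that ⟨S|S'⟩ is real and nonnegative, then the SWAP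
test between |S⟩ and |S'⟩ rejects with probability at least z/4. -/
theorem swapS_test_soundness
    (m : ℕ) (V : Type*) [NormedAddCommGroup V] [InnerProductSpace ℂ V]
    (a a' : Fin m → ℂ) (ψ ψ' : Fin m → V)
    (hψ : ∀ i, ‖ψ i‖ = 1) (hψ' : ∀ i, ‖ψ' i‖ = 1)
    (S S' : PiLp 2 (fun _ : Fin m => V))
    (hS : ∀ i, S i = a i • ψ i) (hS' : ∀ i, S' i = a' i • ψ' i)
    (hSnorm : ‖S‖ = 1) (hS'norm : ‖S'‖ = 1)
    (hreal : ((inner ℂ S S' : ℂ)).im = 0) (hnonneg : 0 ≤ ((inner ℂ S S' : ℂ)).re)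
    (z : ℝ) (hk : ∃ k, ‖a k • ψ k - a' k • ψ' k‖ ^ 2 ≥ z) :
    (1 - ‖(inner ℂ S S' : ℂ)‖ ^ 2) / 2 ≥ z / 4 :=
  swapS_test_soundness_general m V a a' ψ ψ' S S' hS hS' hSnorm hS'norm hreal hnonneg z hk
end
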